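/- Let φ = (1+√5)/2 and A(x,y,z) = (5−√5)yz⁵ + (5+√5)y⁵z − 20y³z³ + (10+10√5)x²yz³ + (10−10√5)x²y³z − 10x⁴yz. For (x,y,z) ∈ ℝ³, (x,y,z) ≠ (0,0,0), the three polynomials A(x,y,z), A(y,z,x), A(z,x,y) vanish simultaneously if and only if (x,y,z) is a nonzero real scalar multiple of one of the following 31 directions: (φ,1,0), (φ,−1,0), (0,φ,1), (0,φ,−1), (1,0,φ), (−1,0,φ) [centres of pentagonal faces]; (1,1,1), (1,1,−1), (1,−1,1), (−1,1,1), (1/φ,φ,0), (1/φ,−φ,0), (φ,0,1/φ), (−φ,0,1/φ), (0,1/φ,φ), (0,1/φ,−φ) [centres of triangular faces]; (φ,1/φ,1), (φ,1/φ,−1), (φ,−1/φ,1), (φ,−1/φ,−1), (1,φ,1/φ), (1,φ,−1/φ), (−1,φ,1/φ), (−1,φ,−1/φ), (1/φ,1,φ), (1/φ,−1,φ), (−1/φ,1,φ), (−1/φ,−1,φ), (1,0,0), (0,1,0), (0,0,1) [midpoints of edges and vertices]. Equivalently, the icosahedral vector field has exactly 62 zeros on the unit sphere, equal to the number of faces (20),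 vertices (12) and edges (30) of an icosahedron. -/

import Mathlib

/-- The golden ratio. -/
noncomputable def φ : ℝ := (1 + Real.sqrt 5) / 2

/-- The numerator of the first component of the icosahedral superflow's vector field. -/
noncomputable def A (x y z : ℝ) : ℝ :=
  (5 - Real.sqrt 5) * y * z ^ 5 + (5 + Real.sqrt 5) * y ^ 5 * z - 20 * y ^ 3 * z ^ 3
    + (10 + 10 * Real.sqrt 5) * x ^ 2 * y * z ^ 3 + (10 - 10 * Real.sqrt 5) * x ^ 2 * y ^ 3 * z
    - 10 * x ^ 4 * y * z

/-- The 31 directions in which the icosahedral vector field vanishes: centres of pentagonal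
faces, centres of triangular faces, midpoints of edges and vertices of the icosahedron. -/
noncomputable def zeroDirections : Set (ℝ × ℝ × ℝ) :=
  { (φ, 1, 0), (φ, -1, 0), (0, φ, 1), (0, φ, -1), (1, 0, φ), (-1, 0, φ),
    (1, 1, 1), (1, 1, -1), (1, -1, 1), (-1, 1, 1),
    (1/φ, φ, 0), (1/φ, -φ, 0), (φ, 0, 1/φ), (-φ, 0, 1/φ), (0, 1/φ, φ), (0, 1/φ, -φ),
    (φ, 1/φ, 1), (φ, 1/φ, -1), (φ, -(1/φ), 1), (φ, -(1/φ), -1),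
    (1, φ, 1/φ), (1, φ, -(1/φ)), (-1, φ, 1/φ), (-1, φ, -(1/φ)),
    (1/φ, 1, φ), (1/φ, -1, φ), (-(1/φ), 1, φ), (-(1/φ), -1, φ),
    (1, 0, 0), (0, 1, 0), (0, 0, 1) }

/-!
Since `A x y z = y * z * Q (x²) (y²) (z²)` for a quadratic form `Q`, whether the field vanishes
depends only on which coordinates vanish and on the squares of the others. So the zero set is
invariant under coordinate sign changes, as it is under cyclic permutation of the coordinates,
and it suffices to classify zeros with nonnegative coordinates. On a coordinate plane `Q 0 Y Z`
factors into two linear forms, with roots `Y : Z = φ² : 1` and `φ⁻⁴ : 1`. Off the coordinate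
planes two combinations of `Q (x²) (y²) (z²)` and `Q (y²) (z²) (x²)` factor as well, and the
four intersection points of these two conics are `x² : y² : z² = 1 : 1 : 1` and the cyclic
shifts of `φ² : φ⁻² : 1`.

The finite checks on the 31 listed directions (that they are zeros, that they are closed under
the symmetries, and that they are pairwise non-parallel) are exact computations in
`ℤ[φ] = ℤ[ω]/(ω² = ω + 1)`, embedded in `ℝ` by `ω ↦ φ`. Each of the 31 lines meets the unit
sphere in two points, whence the count 62.
-/

open QuadraticAlgebra

local notation "ℤφ" => QuadraticAlgebra ℤ 1 1

lemma phi_sq : φ ^ 2 = φ + 1 := Real.goldenRatio_sq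

lemma one_lt_phi : 1 < φ := Real.one_lt_goldenRatio

lemma sqrt_five_eq : √5 = 2 * φ - 1 := by unfold φ; ring

lemma one_div_phi : 1 / φ = φ - 1 := by
  rw [div_eq_iff (by linarith [one_lt_phi])]
  linear_combination -phi_sq

def FieldVanishes (x y z : ℝ) : Prop := A x y z = 0 ∧ A y z x = 0 ∧ A z x y = 0

noncomputable def Q (X Y Z : ℝ) : ℝ :=
  (5 - √5) * Z ^ 2 + (5 + √5) * Y ^ 2 - 20 * Y * Z + (10 + 10 * √5) * X * Z
    + (10 - 10 * √5) * X * Y - 10 * X ^ 2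

lemma A_eq_mul_Q (x y z : ℝ) : A x y z = y * z * Q (x ^ 2) (y ^ 2) (z ^ 2) := by
  unfold A Q; ring

lemma A_mul (c x y z : ℝ) : A (c * x) (c * y) (c * z) = c ^ 6 * A x y z := by
  unfold A; ring

lemma FieldVanishes.mul {x y z : ℝ} (h : FieldVanishes x y z) (c : ℝ) :
    FieldVanishes (c * x) (c * y) (c * z) := by
  simp only [FieldVanishes, A_mul, h.1, h.2.1, h.2.2, mul_zero, and_self]

lemma fieldVanishes_iff {x y z : ℝ} : FieldVanishes x y z ↔
    (y = 0 ∨ z = 0 ∨ Q (x ^ 2) (y ^ 2) (z ^ 2) = 0) ∧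
      (z = 0 ∨ x = 0 ∨ Q (y ^ 2) (z ^ 2) (x ^ 2) = 0) ∧
      (x = 0 ∨ y = 0 ∨ Q (z ^ 2) (x ^ 2) (y ^ 2) = 0) := by
  simp only [FieldVanishes, A_eq_mul_Q, mul_eq_zero, or_assoc]

lemma fieldVanishes_abs_iff {x y z : ℝ} : FieldVanishes |x| |y| |z| ↔ FieldVanishes x y z := by
  simp only [fieldVanishes_iff, sq_abs, abs_eq_zero]

lemma Q_zero_left (Y Z : ℝ) :
    Q 0 Y Z = (2 * φ + 4) * (Y - φ ^ 2 * Z) * (Y - (φ - 1) ^ 4 * Z) := by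
  have := phi_sq
  simp only [Q, sqrt_five_eq]
  grind

lemma Q_combination₁ {X Y Z : ℝ} (h₁ : Q X Y Z = 0) (h₂ : Q Y Z X = 0) :
    (X + φ ^ 2 * Y - (φ + 2) * Z) * (X - (φ - 1) ^ 2 * Y) = 0 := by
  have := phi_sq
  simp only [Q, sqrt_five_eq] at h₁ h₂
  grind

lemma Q_combination₂ {X Y Z : ℝ} (h₁ : Q X Y Z = 0) (h₂ : Q Y Z X = 0) :
    (X + (φ - 3) * Y + (2 - φ) * Z) * (X - φ ^ 2 * Z) = 0 := by
  have := phi_sq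
  simp only [Q, sqrt_five_eq] at h₁ h₂
  grind

section Triples

variable {R S F : Type*}

def mapTriple (f : R → S) (p : R × R × R) : S × S × S := (f p.1, f p.2.1, f p.2.2)

lemma mapTriple_injective {f : R → S} (hf : Function.Injective f) :
    Function.Injective (mapTriple f) := by
  rintro ⟨a, b, c⟩ ⟨a', b', c'⟩ h
  simp only [mapTriple, Prod.mk.injEq] at h
  rw [hf h.1, hf h.2.1, hf h.2.2]

lemma mapTriple_zero [Zero R] [Zero S] [FunLike F R S] [ZeroHomClass F R S] (f : F) :
    mapTriple f 0 = 0 := by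
  simp [mapTriple]

def cross [CommRing R] (p q : R × R × R) : R × R × R :=
  (p.2.1 * q.2.2 - p.2.2 * q.2.1, p.2.2 * q.1 - p.1 * q.2.2, p.1 * q.2.1 - p.2.1 * q.1)

lemma cross_smul_self [CommRing R] (t : R) (p : R × R × R) : cross (t • p) p = 0 := by
  obtain ⟨a, b, c⟩ := p
  simp only [cross, Prod.smul_mk, smul_eq_mul, Prod.mk_eq_zero]
  exact ⟨by ring, by ring, by ring⟩

lemma mapTriple_cross [CommRing R] [CommRing S] [FunLike F R S] [RingHomClass F R S]
    (f : F) (p q : R × R × R) :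
    mapTriple f (cross p q) = cross (mapTriple f p) (mapTriple f q) := by
  simp [mapTriple, cross]

end Triples

section SuperflowNum

variable {R S F : Type*} [CommRing R] [CommRing S] [FunLike F R S] [RingHomClass F R S]

def superflowNum (s x y z : R) : R :=
  (5 - s) * y * z ^ 5 + (5 + s) * y ^ 5 * z - 20 * y ^ 3 * z ^ 3
    + (10 + 10 * s) * x ^ 2 * y * z ^ 3 + (10 - 10 * s) * x ^ 2 * y ^ 3 * z
    - 10 * x ^ 4 * y * z

lemma map_superflowNum (f : F) (s x y z : R) :
    f (superflowNum s x y z) = superflowNum (f s) (f x) (f y) (f z) := by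
  simp [superflowNum, map_ofNat]

end SuperflowNum

noncomputable def goldenEmbedding : ℤφ →ₐ[ℤ] ℝ :=
  QuadraticAlgebra.lift ⟨φ, by simp; linear_combination phi_sq⟩

lemma goldenEmbedding_apply (z : ℤφ) : goldenEmbedding z = z.re + z.im * φ := by
  simp [goldenEmbedding]

lemma goldenEmbedding_omega : goldenEmbedding ω = φ := by
  simp [goldenEmbedding_apply]

lemma goldenEmbedding_omega_sub_one : goldenEmbedding (ω - 1) = 1 / φ := by
  rw [map_sub, map_one, goldenEmbedding_omega, one_div_phi]

lemma goldenEmbedding_injective : Function.Injective goldenEmbedding := by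
  refine (injective_iff_map_eq_zero goldenEmbedding).2 fun z hz => ?_
  rw [goldenEmbedding_apply] at hz
  obtain him | him := eq_or_ne z.im 0
  · simp only [him, Int.cast_zero, zero_mul, add_zero, Int.cast_eq_zero] at hz
    exact QuadraticAlgebra.ext hz him
  · exact absurd hz ((Real.goldenRatio_irrational.intCast_mul him).intCast_add z.re).ne_zero

lemma A_goldenEmbedding (a b c : ℤφ) :
    A (goldenEmbedding a) (goldenEmbedding b) (goldenEmbedding c) =
      goldenEmbedding (superflowNum (2 * ω - 1) a b c) := by
  rw [map_superflowNum]
  simp [goldenEmbedding_omega, sqrt_five_eq, map_ofNat, A, superflowNum]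

def zeroDirectionsList : List (ℤφ × ℤφ × ℤφ) :=
  [(ω, 1, 0), (ω, -1, 0), (0, ω, 1), (0, ω, -1), (1, 0, ω), (-1, 0, ω),
    (1, 1, 1), (1, 1, -1), (1, -1, 1), (-1, 1, 1),
    (ω - 1, ω, 0), (ω - 1, -ω, 0), (ω, 0, ω - 1), (-ω, 0, ω - 1), (0, ω - 1, ω), (0, ω - 1, -ω),
    (ω, ω - 1, 1), (ω, ω - 1, -1), (ω, -(ω - 1), 1), (ω, -(ω - 1), -1),
    (1, ω, ω - 1), (1, ω, -(ω - 1)), (-1, ω, ω - 1), (-1, ω, -(ω - 1)),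
    (ω - 1, 1, ω), (ω - 1, -1, ω), (-(ω - 1), 1, ω), (-(ω - 1), -1, ω),
    (1, 0, 0), (0, 1, 0), (0, 0, 1)]

namespace zeroDirectionsList

lemma superflowNum_eq_zero : ∀ v ∈ zeroDirectionsList,
    superflowNum (2 * ω - 1) v.1 v.2.1 v.2.2 = 0 ∧ superflowNum (2 * ω - 1) v.2.1 v.2.2 v.1 = 0 ∧
      superflowNum (2 * ω - 1) v.2.2 v.1 v.2.1 = 0 := by
  decide

lemma rotate_mem : ∀ v ∈ zeroDirectionsList, (v.2.1, v.2.2, v.1) ∈ zeroDirectionsList := by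
  decide

lemma neg_fst_mem : ∀ v ∈ zeroDirectionsList,
    (-v.1, v.2.1, v.2.2) ∈ zeroDirectionsList ∨ (v.1, -v.2.1, -v.2.2) ∈ zeroDirectionsList := by
  decide

lemma zero_notMem : 0 ∉ zeroDirectionsList := by
  decide

lemma nodup : zeroDirectionsList.Nodup := by
  decide

lemma eq_of_cross_eq_zero :
    ∀ u ∈ zeroDirectionsList, ∀ v ∈ zeroDirectionsList, cross u v = 0 → u = v := by
  decide

end zeroDirectionsList

lemma zeroDirections_eq :
    zeroDirections = {p | p ∈ zeroDirectionsList.map (mapTriple goldenEmbedding)} := by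
  ext p
  simp only [zeroDirections, zeroDirectionsList, List.map_cons, List.map_nil, mapTriple, map_neg,
    map_one, map_zero, goldenEmbedding_omega, goldenEmbedding_omega_sub_one, Set.mem_insert_iff,
    Set.mem_singleton_iff, Set.mem_ofPred_eq, List.mem_cons, List.not_mem_nil, or_false]

lemma mem_zeroDirections_iff {d : ℝ × ℝ × ℝ} :
    d ∈ zeroDirections ↔ ∃ v ∈ zeroDirectionsList, mapTriple goldenEmbedding v = d := by
  rw [zeroDirections_eq]
  exact List.mem_map

lemma fieldVanishes_of_mem_zeroDirections {x y z : ℝ} (hd : (x, y, z) ∈ zeroDirections) :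
    FieldVanishes x y z := by
  obtain ⟨v, hv, hvd⟩ := mem_zeroDirections_iff.1 hd
  simp only [mapTriple, Prod.mk.injEq] at hvd
  obtain ⟨rfl, rfl, rfl⟩ := hvd
  obtain ⟨h₁, h₂, h₃⟩ := zeroDirectionsList.superflowNum_eq_zero v hv
  simp only [FieldVanishes, A_goldenEmbedding, h₁, h₂, h₃, map_zero, and_self]

lemma rotate_mem_zeroDirections {d : ℝ × ℝ × ℝ} (hd : d ∈ zeroDirections) :
    (d.2.1, d.2.2, d.1) ∈ zeroDirections := by
  obtain ⟨v, hv, rfl⟩ := mem_zeroDirections_iff.1 hd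
  exact mem_zeroDirections_iff.2 ⟨_, zeroDirectionsList.rotate_mem v hv, rfl⟩

lemma neg_fst_mem_zeroDirections {d : ℝ × ℝ × ℝ} (hd : d ∈ zeroDirections) :
    (-d.1, d.2.1, d.2.2) ∈ zeroDirections ∨ (d.1, -d.2.1, -d.2.2) ∈ zeroDirections := by
  obtain ⟨v, hv, rfl⟩ := mem_zeroDirections_iff.1 hd
  refine (zeroDirectionsList.neg_fst_mem v hv).imp (fun h => ?_) (fun h => ?_) <;>
    exact mem_zeroDirections_iff.2 ⟨_, h, by simp [mapTriple]⟩

lemma zero_notMem_zeroDirections : 0 ∉ zeroDirections := by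
  intro h0
  obtain ⟨v, hv, hv0⟩ := mem_zeroDirections_iff.1 h0
  rw [← mapTriple_zero goldenEmbedding] at hv0
  exact zeroDirectionsList.zero_notMem (mapTriple_injective goldenEmbedding_injective hv0 ▸ hv)

lemma eq_of_mem_zeroDirections_of_eq_smul {d e : ℝ × ℝ × ℝ} (hd : d ∈ zeroDirections)
    (he : e ∈ zeroDirections) {t : ℝ} (h : d = t • e) : d = e := by
  obtain ⟨u, hu, rfl⟩ := mem_zeroDirections_iff.1 hd
  obtain ⟨v, hv, rfl⟩ := mem_zeroDirections_iff.1 he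
  refine congrArg _ (zeroDirectionsList.eq_of_cross_eq_zero u hu v hv ?_)
  apply mapTriple_injective goldenEmbedding_injective
  rw [mapTriple_cross, h, cross_smul_self, mapTriple_zero]

lemma ncard_zeroDirections : zeroDirections.ncard = 31 := by
  rw [zeroDirections_eq, ← List.coe_toFinset, Set.ncard_coe_finset, List.toFinset_card_of_nodup
    (zeroDirectionsList.nodup.map (mapTriple_injective goldenEmbedding_injective))]
  rfl

def puncturedLines {V : Type*} [AddCommGroup V] [Module ℝ V] (D : Set V) : Set V :=
  {p | ∃ c : ℝ, c ≠ 0 ∧ ∃ d ∈ D, p = c • d}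

lemma inv_sqrt_eq_abs {a c : ℝ} (h : c ^ 2 * a = 1) : (√a)⁻¹ = |c| := by
  rw [show a = (|c|⁻¹) ^ 2 by rw [inv_pow, sq_abs]; exact eq_inv_of_mul_eq_one_right h,
    Real.sqrt_sq (by positivity), inv_inv]

lemma ncard_setOf_eq_one_and_mem_puncturedLines {V : Type*} [AddCommGroup V] [Module ℝ V]
    {N : V → ℝ} (hN : ∀ (c : ℝ) v, N (c • v) = c ^ 2 * N v)
    (hpos : ∀ v ≠ 0, 0 < N v) {D : Set V} (h0 : 0 ∉ D)
    (hpar : ∀ d ∈ D, ∀ e ∈ D, ∀ t : ℝ, d = t • e → d = e) :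
    {p | N p = 1 ∧ p ∈ puncturedLines D}.ncard = 2 * D.ncard := by
  have hND : ∀ d ∈ D, 0 < N d := fun d hd => hpos d (ne_of_mem_of_not_mem hd h0)
  have hS : {p | N p = 1 ∧ p ∈ puncturedLines D} =
      (fun q : ℝ × V => (q.1 / √(N q.2)) • q.2) '' ({1, -1} ×ˢ D) := by
    ext p
    constructor
    · rintro ⟨hp, c, hc, d, hd, rfl⟩
      refine ⟨(SignType.sign c, d), ⟨?_, hd⟩, ?_⟩
      · rcases hc.lt_or_gt with hc | hc <;> simp [hc]
      · change (SignType.sign c / √(N d) : ℝ) • d = c • d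
        rw [div_eq_mul_inv, inv_sqrt_eq_abs (hN c d ▸ hp), sign_mul_abs]
    · rintro ⟨⟨s, d⟩, ⟨hs, hd⟩, rfl⟩
      have hs1 : s ^ 2 = 1 := by rcases hs with rfl | rfl <;> norm_num
      have hs0 : s ≠ 0 := by rintro rfl; norm_num at hs1
      refine ⟨?_, _, div_ne_zero hs0 (Real.sqrt_pos.2 (hND d hd)).ne', d, hd, rfl⟩
      rw [hN, div_pow, Real.sq_sqrt (hND d hd).le, hs1, one_div_mul_cancel (hND d hd).ne']
  have hinj : Set.InjOn (fun q : ℝ × V => (q.1 / √(N q.2)) • q.2) ({1, -1} ×ˢ D) := by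
    rintro ⟨s, d⟩ ⟨hs, hd⟩ ⟨s', e⟩ ⟨-, he⟩ h
    dsimp only at h
    have hs0 : s / √(N d) ≠ 0 :=
      div_ne_zero (by rcases hs with rfl | rfl <;> norm_num) (Real.sqrt_pos.2 (hND d hd)).ne'
    obtain rfl : d = e := hpar d hd e he ((s / √(N d))⁻¹ * (s' / √(N e))) (by
      rw [mul_smul, ← h, inv_smul_smul₀ hs0])
    simpa [(Real.sqrt_pos.2 (hND d hd)).ne'] using
      smul_left_injective ℝ (ne_of_mem_of_not_mem hd h0) h
  rw [hS, hinj.ncard_image, Set.ncard_prod, Set.ncard_pair (by norm_num), mul_comm]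

section Classification

local notation "P" => puncturedLines zeroDirections

lemma mem_puncturedLines_of_eq {x y z : ℝ} (c a b e : ℝ) (hc : c ≠ 0) (hx : x = c * a)
    (hy : y = c * b) (hz : z = c * e) (hd : (a, b, e) ∈ zeroDirections := by
      simp only [zeroDirections, Set.mem_insert_iff, Set.mem_singleton_iff, true_or, or_true]) :
    (x, y, z) ∈ P :=
  ⟨c, hc, _, hd, by rw [hx, hy, hz, Prod.smul_mk, Prod.smul_mk, smul_eq_mul, smul_eq_mul,
    smul_eq_mul]⟩

lemma rotate_mem_puncturedLines {x y z : ℝ} (h : (x, y, z) ∈ P) : (y, z, x) ∈ P := by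
  obtain ⟨c, hc, ⟨a, b, e⟩, hd, h⟩ := h
  simp only [Prod.smul_mk, smul_eq_mul, Prod.mk.injEq] at h
  exact mem_puncturedLines_of_eq c b e a hc h.2.1 h.2.2 h.1 (rotate_mem_zeroDirections hd)

lemma rotate_mem_puncturedLines_iff {x y z : ℝ} : (y, z, x) ∈ P ↔ (x, y, z) ∈ P :=
  ⟨fun h => rotate_mem_puncturedLines (rotate_mem_puncturedLines h), rotate_mem_puncturedLines⟩

lemma neg_fst_mem_puncturedLines {x y z : ℝ} (h : (x, y, z) ∈ P) : (-x, y, z) ∈ P := by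
  obtain ⟨c, hc, ⟨a, b, e⟩, hd, h⟩ := h
  simp only [Prod.smul_mk, smul_eq_mul, Prod.mk.injEq] at h
  obtain ⟨rfl, rfl, rfl⟩ := h
  rcases neg_fst_mem_zeroDirections hd with hd' | hd'
  · exact mem_puncturedLines_of_eq c (-a) b e hc (by ring) rfl rfl hd'
  · exact mem_puncturedLines_of_eq (-c) a (-b) (-e) (neg_ne_zero.2 hc) (by ring) (by ring)
      (by ring) hd'

lemma neg_fst_mem_puncturedLines_iff {x y z : ℝ} : (-x, y, z) ∈ P ↔ (x, y, z) ∈ P :=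
  ⟨fun h => neg_neg x ▸ neg_fst_mem_puncturedLines h, neg_fst_mem_puncturedLines⟩

lemma neg_snd_mem_puncturedLines_iff {x y z : ℝ} : (x, -y, z) ∈ P ↔ (x, y, z) ∈ P := by
  rw [← rotate_mem_puncturedLines_iff, neg_fst_mem_puncturedLines_iff,
    rotate_mem_puncturedLines_iff]

lemma neg_thd_mem_puncturedLines_iff {x y z : ℝ} : (x, y, -z) ∈ P ↔ (x, y, z) ∈ P := by
  rw [← rotate_mem_puncturedLines_iff, ← rotate_mem_puncturedLines_iff,
    neg_fst_mem_puncturedLines_iff, rotate_mem_puncturedLines_iff, rotate_mem_puncturedLines_iff]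

lemma abs_mem_puncturedLines_iff {x y z : ℝ} : (|x|, |y|, |z|) ∈ P ↔ (x, y, z) ∈ P := by
  rcases abs_choice x with hx | hx <;> rcases abs_choice y with hy | hy <;>
    rcases abs_choice z with hz | hz <;>
    simp only [hx, hy, hz, neg_fst_mem_puncturedLines_iff, neg_snd_mem_puncturedLines_iff,
      neg_thd_mem_puncturedLines_iff]

lemma mem_puncturedLines_of_Q_zero_left {x y : ℝ} (hx : 0 < x) (hy : 0 < y)
    (h : Q 0 (x ^ 2) (y ^ 2) = 0) : (x, y, 0) ∈ P := by
  have hφ := one_lt_phi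
  rw [Q_zero_left] at h
  rcases mul_eq_zero.1 h with h | h
  · have hxy : x = φ * y := by
      rw [← sq_eq_sq₀ hx.le (by positivity)]
      linear_combination (mul_eq_zero.1 h).resolve_left (by positivity)
    exact mem_puncturedLines_of_eq y φ 1 0 hy.ne' (by rw [hxy, mul_comm]) (mul_one y).symm
      (mul_zero y).symm
  · have hxy : x = (φ - 1) ^ 2 * y := by
      rw [← sq_eq_sq₀ hx.le (by positivity)]
      linear_combination h
    refine mem_puncturedLines_of_eq (y * (φ - 1)) (1 / φ) φ 0 (mul_ne_zero hy.ne' (by linarith))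
      (by rw [hxy, one_div_phi]; ring) ?_ (mul_zero _).symm
    linear_combination -y * phi_sq

lemma mem_puncturedLines_of_pos {x y z : ℝ} (hx : 0 < x) (hy : 0 < y) (hz : 0 < z)
    (h₁ : Q (x ^ 2) (y ^ 2) (z ^ 2) = 0) (h₂ : Q (y ^ 2) (z ^ 2) (x ^ 2) = 0) : (x, y, z) ∈ P := by
  have hφ := one_lt_phi
  have hφ' := phi_sq
  rcases mul_eq_zero.1 (Q_combination₁ h₁ h₂) with e₁ | e₁ <;>
    rcases mul_eq_zero.1 (Q_combination₂ h₁ h₂) with e₂ | e₂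
  · have hxy : x = y := by rw [← sq_eq_sq₀ hx.le hy.le]; grind
    have hzy : z = y := by rw [← sq_eq_sq₀ hz.le hy.le]; grind
    exact mem_puncturedLines_of_eq y 1 1 1 hy.ne' (by rw [hxy, mul_one]) (mul_one y).symm
      (by rw [hzy, mul_one])
  · have hxz : x = φ * z := by rw [← sq_eq_sq₀ hx.le (by positivity)]; grind
    have hyz : y = (φ - 1) * z := by rw [← sq_eq_sq₀ hy.le (by nlinarith)]; grind
    exact mem_puncturedLines_of_eq z φ (1 / φ) 1 hz.ne' (by rw [hxz, mul_comm])
      (by rw [hyz, one_div_phi, mul_comm]) (mul_one z).symm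
  · have hxy : x = (φ - 1) * y := by rw [← sq_eq_sq₀ hx.le (by nlinarith)]; grind
    have hzy : z = φ * y := by rw [← sq_eq_sq₀ hz.le (by positivity)]; grind
    exact mem_puncturedLines_of_eq y (1 / φ) 1 φ hy.ne' (by rw [hxy, one_div_phi, mul_comm])
      (mul_one y).symm (by rw [hzy, mul_comm])
  · have hyx : y = φ * x := by rw [← sq_eq_sq₀ hy.le (by positivity)]; grind
    have hzx : z = (φ - 1) * x := by rw [← sq_eq_sq₀ hz.le (by nlinarith)]; grind
    exact mem_puncturedLines_of_eq x 1 φ (1 / φ) hx.ne' (mul_one x).symm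
      (by rw [hyx, mul_comm]) (by rw [hzx, one_div_phi, mul_comm])

lemma mem_puncturedLines_of_nonneg {x y z : ℝ} (hx : 0 ≤ x) (hy : 0 ≤ y) (hz : 0 ≤ z)
    (h0 : (x, y, z) ≠ (0, 0, 0)) (hv : FieldVanishes x y z) : (x, y, z) ∈ P := by
  obtain ⟨h₁, h₂, h₃⟩ := fieldVanishes_iff.1 hv
  rcases hx.eq_or_lt with rfl | hx <;> rcases hy.eq_or_lt with rfl | hy <;>
    rcases hz.eq_or_lt with rfl | hz
  · exact absurd rfl h0
  · exact mem_puncturedLines_of_eq z 0 0 1 hz.ne' (by ring) (by ring) (by ring)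
  · exact mem_puncturedLines_of_eq y 0 1 0 hy.ne' (by ring) (by ring) (by ring)
  · refine rotate_mem_puncturedLines (rotate_mem_puncturedLines
      (mem_puncturedLines_of_Q_zero_left hy hz ?_))
    simpa [hy.ne', hz.ne'] using h₁
  · exact mem_puncturedLines_of_eq x 1 0 0 hx.ne' (by ring) (by ring) (by ring)
  · refine rotate_mem_puncturedLines (mem_puncturedLines_of_Q_zero_left hz hx ?_)
    simpa [hx.ne', hz.ne'] using h₂
  · refine mem_puncturedLines_of_Q_zero_left hx hy ?_
    simpa [hx.ne', hy.ne'] using h₃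
  · exact mem_puncturedLines_of_pos hx hy hz ((h₁.resolve_left hy.ne').resolve_left hz.ne')
      ((h₂.resolve_left hz.ne').resolve_left hx.ne')

lemma mem_puncturedLines_iff_fieldVanishes {x y z : ℝ} (h0 : (x, y, z) ≠ (0, 0, 0)) :
    (x, y, z) ∈ P ↔ FieldVanishes x y z := by
  constructor
  · rintro ⟨c, -, ⟨a, b, e⟩, hd, h⟩
    simp only [Prod.smul_mk, smul_eq_mul, Prod.mk.injEq] at h
    rw [h.1, h.2.1, h.2.2]
    exact (fieldVanishes_of_mem_zeroDirections hd).mul c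
  · intro hv
    refine abs_mem_puncturedLines_iff.1 (mem_puncturedLines_of_nonneg (abs_nonneg x)
      (abs_nonneg y) (abs_nonneg z) ?_ (fieldVanishes_abs_iff.2 hv))
    simpa [abs_eq_zero] using h0

end Classification

lemma sum_sq_smul (c : ℝ) (p : ℝ × ℝ × ℝ) :
    (c • p).1 ^ 2 + (c • p).2.1 ^ 2 + (c • p).2.2 ^ 2 =
      c ^ 2 * (p.1 ^ 2 + p.2.1 ^ 2 + p.2.2 ^ 2) := by
  simp only [Prod.smul_fst, Prod.smul_snd, smul_eq_mul]
  ring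

lemma sum_sq_pos {p : ℝ × ℝ × ℝ} (hp : p ≠ 0) : 0 < p.1 ^ 2 + p.2.1 ^ 2 + p.2.2 ^ 2 := by
  obtain ⟨x, y, z⟩ := p
  by_contra! h
  apply hp
  simp only [Prod.mk_eq_zero]
  refine ⟨?_, ?_, ?_⟩ <;> nlinarith [sq_nonneg x, sq_nonneg y, sq_nonneg z]

/-- The simultaneous zeros of `A(x,y,z)`, `A(y,z,x)`, `A(z,x,y)` away from the origin are
exactly the nonzero scalar multiples of the 31 listed directions; equivalently, the
icosahedral vector field has exactly 62 zeros on the unit sphere, equal to the number of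
faces (20), vertices (12), and edges (30) of an icosahedron. -/
theorem stmt10 :
    (∀ x y z : ℝ, (x, y, z) ≠ (0, 0, 0) →
      ((A x y z = 0 ∧ A y z x = 0 ∧ A z x y = 0) ↔
        ∃ c : ℝ, c ≠ 0 ∧ ∃ d ∈ zeroDirections, (x, y, z) = c • d)) ∧
    {p : ℝ × ℝ × ℝ | p.1 ^ 2 + p.2.1 ^ 2 + p.2.2 ^ 2 = 1 ∧
      A p.1 p.2.1 p.2.2 = 0 ∧ A p.2.1 p.2.2 p.1 = 0 ∧ A p.2.2 p.1 p.2.1 = 0}.ncard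
      = 62 := by
  refine ⟨fun x y z h0 => (mem_puncturedLines_iff_fieldVanishes h0).symm, ?_⟩
  have hS : {p : ℝ × ℝ × ℝ | p.1 ^ 2 + p.2.1 ^ 2 + p.2.2 ^ 2 = 1 ∧
      A p.1 p.2.1 p.2.2 = 0 ∧ A p.2.1 p.2.2 p.1 = 0 ∧ A p.2.2 p.1 p.2.1 = 0} =
      {p | p.1 ^ 2 + p.2.1 ^ 2 + p.2.2 ^ 2 = 1 ∧ p ∈ puncturedLines zeroDirections} := by
    ext ⟨x, y, z⟩
    refine and_congr_right fun h => (mem_puncturedLines_iff_fieldVanishes ?_).symm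
    intro h0
    simp only [Prod.mk.injEq] at h0
    obtain ⟨rfl, rfl, rfl⟩ := h0
    norm_num at h
  rw [hS, ncard_setOf_eq_one_and_mem_puncturedLines sum_sq_smul (fun p => sum_sq_pos)
    zero_notMem_zeroDirections (fun d hd e he t => eq_of_mem_zeroDirections_of_eq_smul hd he),
    ncard_zeroDirections]
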